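/- For every phylogenetic tree T ∈ 𝒯_n with n ≥ 4, the number of distinct TBR operations on T is |O_TBR(T)| = 4Γ(T) − 4(n−2)(n−3). -/

import Mathlib

/-!
Formalization framework for unrooted binary phylogenetic trees on the
leaf set `Fin n`, encoded via their split systems (Buneman's
splits-equivalence theorem: a binary phylogenetic tree is uniquely
determined by its set of splits, which is a maximal pairwise-compatible
collection of proper bipartitions of the leaf set containing all
trivial splits).  A split `A | Aᶜ` is recorded by storing both of its
sides.
-/

/-- Two sides (subsets of leaves) are compatible: the corresponding
splits can coexist in a tree. -/
def SidesCompatible {n : ℕ} (A B : Finset (Fin n)) : Prop :=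
  A ⊆ B ∨ B ⊆ A ∨ Disjoint A B ∨ A ∪ B = Finset.univ

/-- An unrooted binary phylogenetic tree on leaf set `Fin n`,
represented by the set of sides of its splits. -/
structure PhyloTree (n : ℕ) where
  sides : Finset (Finset (Fin n))
  proper : ∀ A ∈ sides, A.Nonempty ∧ A ≠ Finset.univ
  compl_mem : ∀ A ∈ sides, Aᶜ ∈ sides
  singleton_mem : ∀ x : Fin n, {x} ∈ sides
  compatible : ∀ A ∈ sides, ∀ B ∈ sides, SidesCompatible A B
  maximal : ∀ A : Finset (Fin n), A.Nonempty → A ≠ Finset.univ →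
    (∀ B ∈ sides, SidesCompatible A B) → A ∈ sides

namespace PhyloTree

variable {n : ℕ}

/-- The split system of the restricted tree `T|X`: two trees agree on
`X` (i.e. `T|X = T'|X`) iff their restricted split systems agree. -/
def restrict (T : PhyloTree n) (X : Finset (Fin n)) : Finset (Finset (Fin n)) :=
  T.sides.image (· ∩ X)

/-- `Γ(T)`: the sum of `|A| * |B|` over all non-trivial splits `A|B` of
`T` (each unordered split is stored twice in `sides`, hence the
division by two, which is exact). -/
def gamma (T : PhyloTree n) : ℕ :=
  (∑ A ∈ T.sides.filter (fun A => 2 ≤ A.card ∧ 2 ≤ Aᶜ.card), A.card * Aᶜ.card) / 2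

/-- A tree-rearrangement move: the deleted edge of `T` (recorded as the
unordered split it induces) together with the output tree. -/
abbrev Move (n : ℕ) := Sym2 (Finset (Fin n)) × PhyloTree n

/-- The set of TBR operations on `T`: delete the edge inducing the
split `A | Aᶜ` and reconnect, obtaining a distinct tree `θ.2`.  The
defining property is that deleting the corresponding edges from `T`
and from `θ.2` yields the same forest, i.e. `A|Aᶜ` is a split of both
trees and the two restrictions agree. -/
def OTBR (T : PhyloTree n) : Set (Move n) :=
  { θ | θ.2 ≠ T ∧ ∃ A : Finset (Fin n),
      θ.1 = Sym2.mk A Aᶜ ∧ A ∈ T.sides ∧ A ∈ θ.2.sides ∧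
      T.restrict A = θ.2.restrict A ∧ T.restrict Aᶜ = θ.2.restrict Aᶜ }

/-- SPR operations: TBR operations where one component `T|A` of the
bisection (the pruned subtree) is regrafted preserving its rooting,
i.e. `T|(A ∪ {x}) = θ(T)|(A ∪ {x})` for some (equivalently every) leaf
`x` of the other side. -/
def OSPR (T : PhyloTree n) : Set (Move n) :=
  { θ | θ ∈ T.OTBR ∧ ∃ A : Finset (Fin n), θ.1 = Sym2.mk A Aᶜ ∧
      ∃ x ∈ Aᶜ, T.restrict (insert x A) = θ.2.restrict (insert x A) }

/-- The effect on sides of swapping the pendant subtrees `T|Y` and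
`T|Z` (for disjoint clusters `Y`, `Z`). -/
def swapSide (Y Z A : Finset (Fin n)) : Finset (Fin n) :=
  if Y ⊆ A ∧ Disjoint Z A then (A \ Y) ∪ Z
  else if Z ⊆ A ∧ Disjoint Y A then (A \ Z) ∪ Y
  else A

/-- NNI operations: SPR operations in which the pruned subtree `T|Y` is
swapped with a pendant subtree `T|Z` for some cluster `Z ≠ Y` of `T`. -/
def ONNI (T : PhyloTree n) : Set (Move n) :=
  { θ | θ ∈ T.OTBR ∧ ∃ Y Z : Finset (Fin n),
      θ.1 = Sym2.mk Y Yᶜ ∧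
      (∃ x ∈ Yᶜ, T.restrict (insert x Y) = θ.2.restrict (insert x Y)) ∧
      Z ∈ T.sides ∧ Z ≠ Y ∧ Disjoint Y Z ∧
      θ.2.sides = T.sides.image (swapSide Y Z) }

/-- The TBR neighbourhood `N_TBR(T) = {θ(T) : θ ∈ O_TBR(T)}`. -/
def NTBR (T : PhyloTree n) : Set (PhyloTree n) := Prod.snd '' T.OTBR

/-- The SPR neighbourhood. -/
def NSPR (T : PhyloTree n) : Set (PhyloTree n) := Prod.snd '' T.OSPR

/-- The NNI neighbourhood. -/
def NNNI (T : PhyloTree n) : Set (PhyloTree n) := Prod.snd '' T.ONNI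

/-- A caterpillar: every internal vertex (equivalently, every
tripartition of the leaves into three clusters) is adjacent to a
leaf. -/
def IsCaterpillar (T : PhyloTree n) : Prop :=
  ∀ A B C : Finset (Fin n), A ∈ T.sides → B ∈ T.sides → C ∈ T.sides →
    Disjoint A B → Disjoint A C → Disjoint B C → A ∪ B ∪ C = Finset.univ →
    (A.card = 1 ∨ B.card = 1 ∨ C.card = 1)

/-- A complete (maximally balanced) tree. -/
def IsComplete (T : PhyloTree n) : Prop :=
  ∃ k : ℕ, 3 * 2 ^ k ≤ n ∧ n < 3 * 2 ^ (k + 1) ∧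
    (∃ Y ∈ T.sides, Y.card = 2 ^ (k + 1)) ∧
    ∀ Y ∈ T.sides, 2 ≤ Y.card → Y.card ≤ 2 ^ (k + 1) →
      ∃ Y₁ Y₂ : Finset (Fin n), Y₁ ∈ T.sides ∧ Y₂ ∈ T.sides ∧
        Disjoint Y₁ Y₂ ∧ Y₁ ∪ Y₂ = Y ∧
        ∃ j : ℕ, Y₁.card = 2 ^ j ∧ 2 ^ (j - 1) ≤ Y₂.card ∧ Y₂.card < 2 ^ (j + 1)

/-- The pendant subtree on the cluster `S` is perfectly balanced:
every cluster inside `S` with at least two leaves splits into two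
equal-sized child clusters. -/
def PerfOn (T : PhyloTree n) (S : Finset (Fin n)) : Prop :=
  ∀ Y ∈ T.sides, Y ⊆ S → 2 ≤ Y.card →
    ∃ Y₁ Y₂ : Finset (Fin n), Y₁ ∈ T.sides ∧ Y₂ ∈ T.sides ∧
      Disjoint Y₁ Y₂ ∧ Y₁ ∪ Y₂ = Y ∧ Y₁.card = Y₂.card

/-- A perfect tree: either `n = 2^k` and `T` is two perfectly balanced
rooted trees with `2^(k-1)` leaves joined by an edge, or
`n = 3·2^(k-1)` and `T` is three perfectly balanced rooted trees with
`2^(k-1)` leaves attached to a common vertex. -/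
def IsPerfect (T : PhyloTree n) : Prop :=
  (∃ k : ℕ, n = 2 ^ k ∧ ∃ A ∈ T.sides,
      A.card = 2 ^ (k - 1) ∧ T.PerfOn A ∧ T.PerfOn Aᶜ) ∨
  (∃ k : ℕ, n = 3 * 2 ^ (k - 1) ∧ ∃ A B C : Finset (Fin n),
      A ∈ T.sides ∧ B ∈ T.sides ∧ C ∈ T.sides ∧
      Disjoint A B ∧ Disjoint A C ∧ Disjoint B C ∧
      A ∪ B ∪ C = Finset.univ ∧
      A.card = 2 ^ (k - 1) ∧ B.card = 2 ^ (k - 1) ∧ C.card = 2 ^ (k - 1) ∧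
      T.PerfOn A ∧ T.PerfOn B ∧ T.PerfOn C)

end PhyloTree

/-!
Deleting the edge `A | Aᶜ` of `T` leaves the trees `T|A` and `T|Aᶜ`, and a reconnection is fixed
by where the new edge is attached to each of them: on one of the `2|A| - 3` edges of `T|A`, or at
its only leaf if `|A| = 1`, and likewise on `T|Aᶜ`. Different choices give different trees and
exactly one gives back `T`, so the edge `A | Aᶜ` carries one operation fewer than the product of
the two numbers of choices: `4|A||Aᶜ| - 6n + 8` for each of the `n - 3` internal edges and `2n - 6`
for each of the `n` pendant ones. Summing gives `4Γ(T) - 4(n - 2)(n - 3)`.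

The edge count `2k - 3` comes from rooting at a leaf `x`: every edge has one side avoiding `x`,
and these sides are the clusters of a rooted binary tree with `k - 1` leaves, of which there are
`2(k - 1) - 1`, since the clusters of a rooted tree are its root cluster and those of its two child
subtrees.
-/

open Finset

section SplitSystems

variable {α : Type*} [DecidableEq α]

def CompatibleOn (X A B : Finset α) : Prop :=
  A ⊆ B ∨ B ⊆ A ∨ Disjoint A B ∨ A ∪ B = X

namespace CompatibleOn

variable {X A B : Finset α}

lemma symm (h : CompatibleOn X A B) : CompatibleOn X B A := by
  unfold CompatibleOn at *
  rw [disjoint_comm, union_comm]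
  tauto

lemma sdiff_right (hA : A ⊆ X) (h : CompatibleOn X A B) : CompatibleOn X A (X \ B) := by
  rcases h with h | h | h | h
  · exact .inr <| .inr <| .inl <| disjoint_sdiff.mono_left h
  · exact .inr <| .inr <| .inr <| by grind
  · exact .inl <| subset_sdiff.2 ⟨hA, h⟩
  · exact .inr <| .inl <| by grind

lemma sdiff_right_iff (hA : A ⊆ X) (hB : B ⊆ X) :
    CompatibleOn X A (X \ B) ↔ CompatibleOn X A B :=
  ⟨fun h => by simpa only [Finset.sdiff_sdiff_eq_self hB] using h.sdiff_right hA, sdiff_right hA⟩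

lemma sdiff_left (hB : B ⊆ X) (h : CompatibleOn X A B) : CompatibleOn X (X \ A) B :=
  (h.symm.sdiff_right hB).symm

lemma of_ground_ssubset {Y : Finset α} (hAY : A ∪ B ⊆ Y) (hYX : Y ⊂ X)
    (h : CompatibleOn X A B) : CompatibleOn Y A B := by
  rcases h with h | h | h | h
  · exact .inl h
  · exact .inr <| .inl h
  · exact .inr <| .inr <| .inl h
  · exact absurd (h ▸ hAY) (not_subset_of_ssubset hYX)

lemma to_ground_superset {Y : Finset α} (h : CompatibleOn Y A B) (hAY : A ∪ B ≠ Y) :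
    CompatibleOn X A B := by
  rcases h with h | h | h | h
  · exact .inl h
  · exact .inr <| .inl h
  · exact .inr <| .inr <| .inl h
  · exact absurd h hAY

lemma inter {V W : Finset α} (hA : A ⊆ X) (h : CompatibleOn X V W) :
    CompatibleOn A (V ∩ A) (W ∩ A) := by
  rcases h with h | h | h | h
  · exact .inl <| inter_subset_inter_right h
  · exact .inr <| .inl <| inter_subset_inter_right h
  · exact .inr <| .inr <| .inl <| h.mono inter_subset_left inter_subset_left
  · exact .inr <| .inr <| .inr <| by rw [← union_inter_distrib_right, h, inter_eq_right.2 hA]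

end CompatibleOn

lemma subset_or_subset_sdiff_of_compatibleOn {X A Y C : Finset α} (hAX : A ⊂ X) (hYA : Y ⊆ A)
    (hY : Y.Nonempty) (hCA : C ⊂ A) (h₁ : CompatibleOn X C Y) (h₂ : CompatibleOn X C (A \ Y)) :
    C ⊆ Y ∨ C ⊆ A \ Y := by
  have hCX : ∀ P ⊆ A, C ∪ P ≠ X := fun P hP h =>
    not_subset_of_ssubset hAX (h ▸ union_subset hCA.subset hP)
  rcases h₁ with h₁ | h₁ | h₁ | h₁
  · exact .inl h₁
  · rcases h₂ with h₂ | h₂ | h₂ | h₂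
    · obtain ⟨y, hy⟩ := hY
      exact absurd (h₂ (h₁ hy)) (by simp [hy])
    · exact absurd (by grind) (not_subset_of_ssubset hCA)
    · exact .inl fun c hc => by grind [disjoint_left]
    · exact absurd h₂ (hCX _ sdiff_subset)
  · exact .inr <| subset_sdiff.2 ⟨hCA.subset, h₁⟩
  · exact absurd h₁ (hCX _ hYA)

/-- The axioms of `PhyloTree.sides` for an arbitrary leaf set `X`, so that they also describe
the restrictions `T|A`. -/
structure IsSplitSystem (X : Finset α) (S : Finset (Finset α)) : Prop where
  subset : ∀ A ∈ S, A ⊆ X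
  nonempty : ∀ A ∈ S, A.Nonempty
  ne_ground : ∀ A ∈ S, A ≠ X
  sdiff_mem : ∀ A ∈ S, X \ A ∈ S
  singleton_mem : ∀ x ∈ X, {x} ∈ S
  compatible : ∀ A ∈ S, ∀ B ∈ S, CompatibleOn X A B
  maximal : ∀ A ⊆ X, A.Nonempty → A ≠ X → (∀ B ∈ S, CompatibleOn X A B) → A ∈ S

namespace IsSplitSystem

variable {X A B C Y : Finset α} {S : Finset (Finset α)}

lemma ssubset (hS : IsSplitSystem X S) (hA : A ∈ S) : A ⊂ X :=
  Finset.ssubset_iff_subset_ne.2 ⟨hS.subset A hA, hS.ne_ground A hA⟩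

lemma eq_of_subset {R : Finset (Finset α)} (hS : IsSplitSystem X S)
    (hR : ∀ A ∈ R, ∀ B ∈ R, CompatibleOn X A B) (hRX : ∀ A ∈ R, A ⊂ X ∧ A.Nonempty)
    (hSR : S ⊆ R) : S = R :=
  hSR.antisymm fun C hC => hS.maximal C (hRX C hC).1.subset (hRX C hC).2
    (hRX C hC).1.ne fun D hD => hR C hC D (hSR hD)

/-- `B` and `A \ B` are the two children of `A` in the tree rooted outside `A`. -/
lemma sdiff_mem_of_maximal (hS : IsSplitSystem X S) (hA : A ∈ S) (hB : B ∈ S) (hBA : B ⊂ A)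
    (hmax : ∀ C ∈ S, B ⊆ C → C ⊂ A → C = B) : A \ B ∈ S := by
  have hAX := hS.ssubset hA
  refine hS.maximal _ (sdiff_subset.trans hAX.subset)
    (sdiff_nonempty.2 (not_subset_of_ssubset hBA)) (sdiff_subset.trans_ssubset hAX).ne
    fun C hC => ?_
  have hBX := hBA.subset.trans hAX.subset
  rcases hS.compatible C hC B hB with hCB | hBC | hCB | hCB
  · exact .inr <| .inr <| .inl <| sdiff_disjoint.mono_right hCB
  · rcases hS.compatible C hC A hA with hCA | hAC | hCA | hCA
    · obtain rfl | hCA := hCA.eq_or_ssubset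
      · exact .inl sdiff_subset
      · exact hmax C hC hBC hCA ▸ .inr (.inr (.inl sdiff_disjoint))
    · exact .inl <| sdiff_subset.trans hAC
    · exact .inr <| .inr <| .inl <| hCA.symm.mono_left sdiff_subset
    · exact .inr <| .inr <| .inr <| by grind
  · rcases hS.compatible C hC A hA with hCA | hAC | hCA | hCA
    · exact .inr <| .inl <| subset_sdiff.2 ⟨hCA, hCB⟩
    · obtain ⟨b, hb⟩ := hS.nonempty B hB
      exact absurd (hAC (hBA.subset hb)) (disjoint_right.1 hCB hb)
    · exact .inr <| .inr <| .inl <| hCA.symm.mono_left sdiff_subset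
    · have hD := hS.sdiff_mem C hC
      have hDA : X \ C ⊆ A := by grind
      have hBD : B ⊆ X \ C := subset_sdiff.2 ⟨hBX, hCB.symm⟩
      obtain hDA | hDA := hDA.eq_or_ssubset
      · exact .inr <| .inr <| .inl <| by grind [disjoint_left]
      · have := hmax _ hD hBD hDA
        exact .inl <| by grind
  · exact .inl <| by grind

lemma exists_ssubset_sdiff_mem (hS : IsSplitSystem X S) (hA : A ∈ S) (h : 1 < A.card) :
    ∃ Y ∈ S, A \ Y ∈ S ∧ Y ⊂ A := by
  obtain ⟨a, ha⟩ := card_pos.1 (zero_lt_one.trans h)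
  have hne : (S.filter (· ⊂ A)).Nonempty := ⟨{a}, mem_filter.2
    ⟨hS.singleton_mem a (hS.subset A hA ha), ssubset_of_subset_of_ne (by simpa using ha)
      fun h' => by rw [← h', card_singleton] at h; exact lt_irrefl _ h⟩⟩
  obtain ⟨B, hB, hmax⟩ := exists_max_image _ card hne
  obtain ⟨hBS, hBA⟩ := mem_filter.1 hB
  refine ⟨B, hBS, hS.sdiff_mem_of_maximal hA hBS hBA fun C hC hBC hCA => ?_, hBA⟩
  exact (eq_of_subset_of_card_le hBC (hmax C (mem_filter.2 ⟨hC, hCA⟩))).symm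

lemma subset_or_subset_sdiff (hS : IsSplitSystem X S) (hA : A ∈ S) (hY : Y ∈ S)
    (hAY : A \ Y ∈ S) (hYA : Y ⊆ A) (hC : C ∈ S) (hCA : C ⊂ A) : C ⊆ Y ∨ C ⊆ A \ Y :=
  subset_or_subset_sdiff_of_compatibleOn (hS.ssubset hA) hYA (hS.nonempty Y hY) hCA
    (hS.compatible C hC Y hY) (hS.compatible C hC _ hAY)

lemma eq_or_eq_sdiff_of_sdiff_mem (hS : IsSplitSystem X S) (hA : A ∈ S) (hY : Y ∈ S)
    (hAY : A \ Y ∈ S) (hYA : Y ⊂ A) (hB : B ∈ S) (hAB : A \ B ∈ S) (hBA : B ⊂ A) :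
    B = Y ∨ B = A \ Y := by
  have hB₁ := hS.subset_or_subset_sdiff hA hY hAY hYA.subset hB hBA
  have hB₂ := hS.subset_or_subset_sdiff hA hY hAY hYA.subset hAB
    (sdiff_ssubset hBA.subset (hS.nonempty B hB))
  have hmem : ∀ y ∈ A, y ∉ B → y ∈ A \ B := fun y hy hyB => mem_sdiff.2 ⟨hy, hyB⟩
  rcases hB₁ with h₁ | h₁ <;> rcases hB₂ with h₂ | h₂
  · refine absurd (fun y hy => ?_) (not_subset_of_ssubset hYA)
    by_cases hyB : y ∈ B
    exacts [h₁ hyB, h₂ (hmem y hy hyB)]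
  · refine .inl <| h₁.antisymm fun y hy => by_contra fun hyB => ?_
    exact (mem_sdiff.1 (h₂ (hmem y (hYA.subset hy) hyB))).2 hy
  · refine .inr <| h₁.antisymm fun y hy => by_contra fun hyB => ?_
    exact (mem_sdiff.1 hy).2 (h₂ (hmem y (mem_sdiff.1 hy).1 hyB))
  · obtain ⟨y, hy⟩ := hS.nonempty Y hY
    by_cases hyB : y ∈ B
    · exact ((mem_sdiff.1 (h₁ hyB)).2 hy).elim
    · exact ((mem_sdiff.1 (h₂ (hmem y (hYA.subset hy) hyB))).2 hy).elim

end IsSplitSystem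

lemma sum_eq_two_nsmul_sum_filter_notMem {β : Type*} [AddCommMonoid β] {X : Finset α}
    {F : Finset (Finset α)} (hF : ∀ C ∈ F, C ⊆ X ∧ X \ C ∈ F) {x : α} (hx : x ∈ X)
    (f : Finset α → β) (hf : ∀ C ∈ F, f (X \ C) = f C) :
    ∑ C ∈ F, f C = 2 • ∑ C ∈ F.filter (x ∉ ·), f C := by
  rw [← sum_filter_add_sum_filter_not F (x ∉ ·), two_nsmul]
  congr 1
  refine sum_nbij' (X \ ·) (X \ ·) ?_ ?_ ?_ ?_ ?_ <;> simp only [mem_filter, not_not]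
  · exact fun C ⟨hC, hxC⟩ => ⟨(hF C hC).2, fun h => (mem_sdiff.1 h).2 hxC⟩
  · exact fun C ⟨hC, hxC⟩ => ⟨(hF C hC).2, by simp [hx, hxC]⟩
  · exact fun C ⟨hC, _⟩ => Finset.sdiff_sdiff_eq_self (hF C hC).1
  · exact fun C ⟨hC, _⟩ => Finset.sdiff_sdiff_eq_self (hF C hC).1
  · exact fun C ⟨hC, _⟩ => (hf C hC).symm

lemma card_eq_two_mul_card_filter_notMem {X : Finset α} {F : Finset (Finset α)}
    (hF : ∀ C ∈ F, C ⊆ X ∧ X \ C ∈ F) {x : α} (hx : x ∈ X) :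
    F.card = 2 * (F.filter (x ∉ ·)).card := by
  simpa only [← card_eq_sum_ones, smul_eq_mul] using
    sum_eq_two_nsmul_sum_filter_notMem hF hx (fun _ => (1 : ℕ)) fun _ _ => rfl

namespace IsSplitSystem

variable {X A Y : Finset α} {S : Finset (Finset α)}

lemma filter_subset_eq_insert_union (hS : IsSplitSystem X S) (hA : A ∈ S) (hY : Y ∈ S)
    (hAY : A \ Y ∈ S) (hYA : Y ⊆ A) :
    S.filter (· ⊆ A) = insert A (S.filter (· ⊆ Y) ∪ S.filter (· ⊆ A \ Y)) := by
  ext C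
  simp only [mem_filter, mem_insert, mem_union]
  constructor
  · rintro ⟨hC, hCA⟩
    obtain rfl | hCA := hCA.eq_or_ssubset
    · exact .inl rfl
    · rcases hS.subset_or_subset_sdiff hA hY hAY hYA hC hCA with h | h
      · exact .inr <| .inl ⟨hC, h⟩
      · exact .inr <| .inr ⟨hC, h⟩
  · rintro (rfl | ⟨hC, h⟩ | ⟨hC, h⟩)
    · exact ⟨hA, subset_rfl⟩
    · exact ⟨hC, h.trans hYA⟩
    · exact ⟨hC, h.trans sdiff_subset⟩

lemma card_filter_subset_add_one (hS : IsSplitSystem X S) (hA : A ∈ S) :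
    (S.filter (· ⊆ A)).card + 1 = 2 * A.card := by
  induction A using Finset.strongInduction with
  | H A ih =>
  obtain hA1 | hA1 := (one_le_card.2 (hS.nonempty A hA)).eq_or_lt
  · obtain ⟨a, rfl⟩ := card_eq_one.1 hA1.symm
    have : S.filter (· ⊆ {a}) = {{a}} := by
      ext C
      simp only [mem_filter, mem_singleton, subset_singleton_iff]
      exact ⟨fun ⟨hC, h⟩ => h.resolve_left (hS.nonempty C hC).ne_empty, by rintro rfl; simp [hA]⟩
    rw [this, card_singleton, card_singleton]
  · obtain ⟨Y, hY, hAY, hYA⟩ := hS.exists_ssubset_sdiff_mem hA hA1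
    have hAYA : A \ Y ⊂ A := sdiff_ssubset hYA.subset (hS.nonempty Y hY)
    have hdisj : Disjoint (S.filter (· ⊆ Y)) (S.filter (· ⊆ A \ Y)) := by
      refine disjoint_filter.2 fun C hC hCY hCAY => ?_
      obtain ⟨c, hc⟩ := hS.nonempty C hC
      exact (mem_sdiff.1 (hCAY hc)).2 (hCY hc)
    have hAnot : A ∉ S.filter (· ⊆ Y) ∪ S.filter (· ⊆ A \ Y) := by
      simp only [mem_union, mem_filter, not_or, not_and]
      exact ⟨fun _ => not_subset_of_ssubset hYA, fun _ => not_subset_of_ssubset hAYA⟩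
    rw [hS.filter_subset_eq_insert_union hA hY hAY hYA.subset, card_insert_of_notMem hAnot,
      card_union_of_disjoint hdisj]
    have := ih Y hYA hY
    have := ih _ hAYA hAY
    have := card_sdiff_add_card_eq_card hYA.subset
    omega

lemma card_add_six (hS : IsSplitSystem X S) (hX : 1 < X.card) : S.card + 6 = 4 * X.card := by
  obtain ⟨x, hx⟩ := card_pos.1 (zero_lt_one.trans hX)
  have hR : X \ {x} ∈ S := hS.sdiff_mem _ (hS.singleton_mem x hx)
  have hfilter : S.filter (x ∉ ·) = S.filter (· ⊆ X \ {x}) := by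
    refine filter_congr fun C hC => ?_
    simp [subset_sdiff, hS.subset C hC]
  have hcard := card_eq_two_mul_card_filter_notMem
    (fun C hC => ⟨hS.subset C hC, hS.sdiff_mem C hC⟩) hx
  rw [hfilter] at hcard
  have := hS.card_filter_subset_add_one hR
  have := card_sdiff_add_card_eq_card (singleton_subset_iff.2 hx)
  simp only [card_singleton] at this
  omega

end IsSplitSystem

section Traces

/-- The splits of the restriction `T|A`: the nonempty proper traces on `A` of the sides of `T`. -/
def traces (S : Finset (Finset α)) (A : Finset α) : Finset (Finset α) :=
  (S.image (· ∩ A)).filter fun W => W.Nonempty ∧ W ≠ A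

variable {X A U W : Finset α} {S : Finset (Finset α)}

lemma mem_traces : W ∈ traces S A ↔ (∃ V ∈ S, V ∩ A = W) ∧ W.Nonempty ∧ W ≠ A := by
  simp [traces]

lemma ssubset_of_mem_traces (hW : W ∈ traces S A) : W ⊂ A := by
  obtain ⟨⟨V, -, rfl⟩, -, hne⟩ := mem_traces.1 hW
  exact ssubset_of_subset_of_ne inter_subset_right hne

lemma one_lt_card_of_mem_traces (hW : W ∈ traces S A) : 1 < A.card :=
  (one_le_card.2 (mem_traces.1 hW).2.1).trans_lt (card_lt_card (ssubset_of_mem_traces hW))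

lemma mem_traces_of_mem (hW : W ∈ S) (hne : W.Nonempty) (hWA : W ⊂ A) : W ∈ traces S A :=
  mem_traces.2 ⟨⟨W, hW, inter_eq_left.2 hWA.subset⟩, hne, hWA.ne⟩

namespace IsSplitSystem

lemma sdiff_mem_traces (hS : IsSplitSystem X S) (hA : A ∈ S) (hW : W ∈ traces S A) :
    A \ W ∈ traces S A := by
  have hWA := ssubset_of_mem_traces hW
  obtain ⟨⟨V, hV, rfl⟩, hne, -⟩ := mem_traces.1 hW
  have hAX := hS.subset A hA
  refine mem_traces.2 ⟨⟨X \ V, hS.sdiff_mem V hV, by grind⟩,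
    sdiff_nonempty.2 (not_subset_of_ssubset hWA), (sdiff_ssubset hWA.subset hne).ne⟩

lemma exists_ssubset_not_compatibleOn (hS : IsSplitSystem X S) (hA : A ∈ S) (hUA : U ⊆ A)
    (hU : U.Nonempty) (hUS : U ∉ S) : ∃ D ∈ S, D ⊂ A ∧ ¬CompatibleOn X U D := by
  have hAX := hS.ssubset hA
  obtain ⟨C, hC, hUC⟩ : ∃ C ∈ S, ¬CompatibleOn X U C := by
    by_contra! h
    exact hUS (hS.maximal U (hUA.trans hAX.subset) hU (hUA.trans_ssubset hAX).ne h)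
  have hDA : ∀ D, ¬CompatibleOn X U D → D ⊆ A → D ⊂ A := fun D hUD hDA =>
    ssubset_of_subset_of_ne hDA fun h => hUD (.inl (h ▸ hUA))
  rcases hS.compatible C hC A hA with h | h | h | h
  · exact ⟨C, hC, hDA C hUC h, hUC⟩
  · exact absurd (.inl (hUA.trans h)) hUC
  · exact absurd (.inr (.inr (.inl (h.symm.mono_left hUA)))) hUC
  · have hUC' : ¬CompatibleOn X U (X \ C) := fun h' =>
      hUC ((CompatibleOn.sdiff_right_iff (hUA.trans hAX.subset) (hS.subset C hC)).1 h')
    have hCA : X \ C ⊆ A := by grind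
    exact ⟨X \ C, hS.sdiff_mem C hC, hDA _ hUC' hCA, hUC'⟩

lemma mem_traces_of_forall_compatibleOn (hS : IsSplitSystem X S) (hA : A ∈ S) (hWA : W ⊂ A)
    (hW : W.Nonempty) (hcomp : ∀ V ∈ traces S A, CompatibleOn A W V) : W ∈ traces S A := by
  -- Otherwise neither `W` nor `A \ W` is a member of `S`, and members `D₁, D₂ ⊂ A` witnessing
  -- this must satisfy `W ∪ D₁ = A` and `W ⊆ D₂`, which no compatible pair can.
  by_contra hWt
  have hAX := hS.ssubset hA
  have hcover : ∀ U ⊆ A, (∀ V ∈ traces S A, CompatibleOn A U V) → ∀ D ∈ S, D ⊂ A →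
      ¬CompatibleOn X U D → U ∪ D = A := fun U hU hUc D hD hDA hUD => by
    rcases hUc D (mem_traces_of_mem hD (hS.nonempty D hD) hDA) with h' | h' | h' | h'
    exacts [(hUD (.inl h')).elim, (hUD (.inr (.inl h'))).elim,
      (hUD (.inr (.inr (.inl h')))).elim, h']
  have hAW : (A \ W).Nonempty := sdiff_nonempty.2 (not_subset_of_ssubset hWA)
  obtain ⟨D₁, hD₁, hD₁A, hWD₁⟩ := hS.exists_ssubset_not_compatibleOn hA hWA.subset hW
    fun h' => hWt (mem_traces_of_mem h' hW hWA)
  obtain ⟨D₂, hD₂, hD₂A, hWD₂⟩ := hS.exists_ssubset_not_compatibleOn hA sdiff_subset hAW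
    fun h' => hWt (by simpa [Finset.sdiff_sdiff_eq_self hWA.subset] using
      hS.sdiff_mem_traces hA (mem_traces_of_mem h' hAW (sdiff_ssubset hWA.subset hW)))
  have h₁ := hcover W hWA.subset hcomp D₁ hD₁ hD₁A hWD₁
  have h₂ := hcover _ sdiff_subset (fun V hV => (hcomp V hV).sdiff_left
    (ssubset_of_mem_traces hV).subset) D₂ hD₂ hD₂A hWD₂
  unfold CompatibleOn at hWD₁ hWD₂
  rcases hS.compatible D₁ hD₁ D₂ hD₂ with h | h | h | h
  · exact hWD₂ (.inl (by grind))
  · exact hWD₁ (.inl (by grind))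
  · exact hWD₁ (.inr (.inr (.inl (by grind [disjoint_left]))))
  · exact not_subset_of_ssubset hAX (h ▸ union_subset hD₁A.subset hD₂A.subset)

theorem isSplitSystem_traces (hS : IsSplitSystem X S) (hA : A ∈ S) (h : 1 < A.card) :
    IsSplitSystem A (traces S A) where
  subset W hW := (ssubset_of_mem_traces hW).subset
  nonempty W hW := (mem_traces.1 hW).2.1
  ne_ground W hW := (mem_traces.1 hW).2.2
  sdiff_mem W hW := hS.sdiff_mem_traces hA hW
  singleton_mem x hx := mem_traces_of_mem (hS.singleton_mem x (hS.subset A hA hx))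
    (singleton_nonempty x) (ssubset_of_subset_of_ne (singleton_subset_iff.2 hx)
      fun h' => by rw [← h', card_singleton] at h; exact lt_irrefl _ h)
  compatible W hW V hV := by
    obtain ⟨⟨W', hW', rfl⟩, -⟩ := mem_traces.1 hW
    obtain ⟨⟨V', hV', rfl⟩, -⟩ := mem_traces.1 hV
    exact (hS.compatible W' hW' V' hV').inter (hS.subset A hA)
  maximal W hWA hW hWA' hcomp :=
    hS.mem_traces_of_forall_compatibleOn hA (ssubset_of_subset_of_ne hWA hWA') hW hcomp

lemma card_traces_add_six (hS : IsSplitSystem X S) (hA : A ∈ S) (h : 1 < A.card) :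
    (traces S A).card + 6 = 4 * A.card :=
  (hS.isSplitSystem_traces hA h).card_add_six h

end IsSplitSystem

end Traces

section Rerooting

/-- The clusters of the tree `T|A` rooted on its edge `Y | A \ Y`. -/
def rerooted (S : Finset (Finset α)) (A Y : Finset α) : Finset (Finset α) :=
  (traces S A).filter fun W => W ⊆ Y ∨ W ⊆ A \ Y

variable {X A U W Y : Finset α} {S : Finset (Finset α)}

lemma mem_rerooted : W ∈ rerooted S A Y ↔ W ∈ traces S A ∧ (W ⊆ Y ∨ W ⊆ A \ Y) := by
  simp [rerooted]

lemma subset_of_mem_rerooted (hW : W ∈ rerooted S A Y) : W ⊆ A :=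
  (ssubset_of_mem_traces (mem_rerooted.1 hW).1).subset

lemma self_mem_rerooted (hY : Y ∈ traces S A) : Y ∈ rerooted S A Y :=
  mem_rerooted.2 ⟨hY, .inl subset_rfl⟩

namespace IsSplitSystem

lemma sdiff_mem_rerooted (hS : IsSplitSystem X S) (hA : A ∈ S) (hY : Y ∈ traces S A) :
    A \ Y ∈ rerooted S A Y :=
  mem_rerooted.2 ⟨hS.sdiff_mem_traces hA hY, .inr subset_rfl⟩

lemma mem_rerooted_or_sdiff_mem (hS : IsSplitSystem X S) (hA : A ∈ S) (hY : Y ∈ traces S A)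
    (hU : U ∈ traces S A) : U ∈ rerooted S A Y ∨ A \ U ∈ rerooted S A Y := by
  have hUA := (ssubset_of_mem_traces hU).subset
  have hAU := hS.sdiff_mem_traces hA hU
  rcases (hS.isSplitSystem_traces hA (one_lt_card_of_mem_traces hU)).compatible U hU Y hY with
    h | h | h | h
  · exact .inl <| mem_rerooted.2 ⟨hU, .inl h⟩
  · exact .inr <| mem_rerooted.2 ⟨hAU, .inr (sdiff_subset_sdiff subset_rfl h)⟩
  · exact .inl <| mem_rerooted.2 ⟨hU, .inr (subset_sdiff.2 ⟨hUA, h⟩)⟩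
  · exact .inr <| mem_rerooted.2 ⟨hAU, .inl fun x hx => by grind⟩

lemma rerooted_compatible (hS : IsSplitSystem X S) (hA : A ∈ S) (hY : Y ∈ traces S A)
    (hW : W ∈ rerooted S A Y) (hU : U ∈ rerooted S A Y) : CompatibleOn X W U := by
  have hWU : CompatibleOn A W U :=
    (hS.isSplitSystem_traces hA (one_lt_card_of_mem_traces hY)).compatible W
    (mem_rerooted.1 hW).1 U (mem_rerooted.1 hU).1
  have hsame : ∀ P ⊂ A, W ⊆ P → U ⊆ P → CompatibleOn X W U := fun P hP hWP hUP =>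
    hWU.to_ground_superset fun h => not_subset_of_ssubset hP (h ▸ union_subset hWP hUP)
  have hYA := ssubset_of_mem_traces hY
  rcases (mem_rerooted.1 hW).2 with hWP | hWP <;> rcases (mem_rerooted.1 hU).2 with hUP | hUP
  · exact hsame Y hYA hWP hUP
  · exact .inr <| .inr <| .inl <| disjoint_sdiff.mono hWP hUP
  · exact .inr <| .inr <| .inl <| sdiff_disjoint.mono hWP hUP
  · exact hsame _ (sdiff_ssubset hYA.subset (mem_traces.1 hY).2.1) hWP hUP

end IsSplitSystem

end Rerooting

section Attachments

/-- The number of places at which a new edge can be attached to a binary tree with `k` leaves: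
its `2k - 3` edges, or the leaf itself when `k = 1`. -/
def attachCount (k : ℕ) : ℕ := if 1 < k then 2 * k - 3 else 1

/-- The places at which a new edge can be attached to `T|A`: its edges, each represented by the
side avoiding `a ∈ A`, or the single leaf (represented by `∅`) when `|A| = 1`. -/
def attachments (S : Finset (Finset α)) (A : Finset α) (a : α) : Finset (Finset α) :=
  if 1 < A.card then (traces S A).filter (a ∉ ·) else {∅}

variable {X A Y : Finset α} {S S' : Finset (Finset α)} {a : α}

lemma mem_traces_of_mem_attachments (hY : Y ∈ attachments S A a) (h : 1 < A.card) :
    Y ∈ traces S A ∧ a ∉ Y := by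
  simpa [attachments, h] using hY

lemma eq_empty_of_mem_attachments (hY : Y ∈ attachments S A a) (h : ¬1 < A.card) : Y = ∅ := by
  simpa [attachments, h] using hY

lemma IsSplitSystem.card_attachments (hS : IsSplitSystem X S) (hA : A ∈ S) (ha : a ∈ A) :
    (attachments S A a).card = attachCount A.card := by
  unfold attachments attachCount
  split_ifs with h
  · have h₁ := hS.card_traces_add_six hA h
    have h₂ := card_eq_two_mul_card_filter_notMem
      (fun W hW => ⟨(ssubset_of_mem_traces hW).subset, hS.sdiff_mem_traces hA hW⟩) ha
    omega
  · rfl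

lemma IsSplitSystem.exists_mem_attachments (hS' : IsSplitSystem X S') (hA' : A ∈ S')
    (htA : traces S' A = traces S A) (a : α) :
    ∃ Y ∈ attachments S A a, 1 < A.card → Y ∈ S' ∧ A \ Y ∈ S' ∧ Y ⊂ A := by
  by_cases h : 1 < A.card
  · obtain ⟨Y, hY, hAY, hYA⟩ := hS'.exists_ssubset_sdiff_mem hA' h
    have hAYA := sdiff_ssubset hYA.subset (hS'.nonempty Y hY)
    have htr : ∀ {W}, W ∈ S' → W ⊂ A → W ∈ traces S A := fun hW hWA =>
      htA ▸ mem_traces_of_mem hW (hS'.nonempty _ hW) hWA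
    by_cases haY : a ∈ Y
    · refine ⟨A \ Y, ?_, fun _ => ⟨hAY, ?_, hAYA⟩⟩
      · simp [attachments, h, htr hAY hAYA, haY]
      · rwa [Finset.sdiff_sdiff_eq_self hYA.subset]
    · exact ⟨Y, by simp [attachments, h, htr hY hYA, haY], fun _ => ⟨hY, hAY, hYA⟩⟩
  · exact ⟨∅, by simp [attachments, h], fun h' => absurd h' h⟩

end Attachments

end SplitSystems

section Reconnect

variable {α : Type*} [DecidableEq α] [Fintype α]

lemma IsSplitSystem.compl_mem {S : Finset (Finset α)} {A : Finset α}
    (hS : IsSplitSystem univ S) (hA : A ∈ S) : Aᶜ ∈ S := by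
  simpa [compl_eq_univ_sdiff] using hS.sdiff_mem A hA

namespace CompatibleOn

variable {A B : Finset α}

lemma compl_left (h : CompatibleOn univ A B) : CompatibleOn univ Aᶜ B := by
  simpa [compl_eq_univ_sdiff] using h.sdiff_left (subset_univ B)

lemma compl_right (h : CompatibleOn univ A B) : CompatibleOn univ A Bᶜ :=
  h.symm.compl_left.symm

end CompatibleOn

lemma mem_of_compatibleOn_of_forall_subset {R : Finset (Finset α)} {P : Finset α → Prop}
    {A C : Finset α} (hR : ∀ D ∈ R, Dᶜ ∈ R) (hP : ∀ D, P D → P Dᶜ)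
    (hsub : ∀ D, P D → D ⊆ A ∨ D ⊆ Aᶜ → D ∈ R) (hC : P C) (hCA : CompatibleOn univ C A) :
    C ∈ R := by
  have hcompl : Cᶜ ∈ R → C ∈ R := fun h => by simpa using hR _ h
  rcases hCA with h | h | h | h
  · exact hsub C hC (.inl h)
  · exact hcompl (hsub _ (hP C hC) (.inr (compl_subset_compl.2 h)))
  · exact hsub C hC (.inr (subset_compl_iff_disjoint_right.2 h))
  · exact hcompl (hsub _ (hP C hC) (.inl fun x hx =>
      (mem_union.1 (h ▸ mem_univ x)).resolve_left (mem_compl.1 hx)))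

/-- The clusters, on either side of the new edge, of the tree obtained from `T` by deleting the
edge `A | Aᶜ` and joining the edge `Y | A \ Y` of `T|A` to the edge `Z | Aᶜ \ Z` of `T|Aᶜ`
(if `A` or `Aᶜ` is a single leaf, the new edge ends at that leaf, whatever `Y` or `Z` is). -/
def reconnectClusters (S : Finset (Finset α)) (A Y Z : Finset α) : Finset (Finset α) :=
  insert A (insert Aᶜ (rerooted S A Y ∪ rerooted S Aᶜ Z))

def reconnect (S : Finset (Finset α)) (A Y Z : Finset α) : Finset (Finset α) :=
  reconnectClusters S A Y Z ∪ (reconnectClusters S A Y Z).image compl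

variable {S S' : Finset (Finset α)} {A C D W Y Y' Z Z' : Finset α} {a b : α}

lemma mem_reconnectClusters : C ∈ reconnectClusters S A Y Z ↔
    C = A ∨ C = Aᶜ ∨ C ∈ rerooted S A Y ∨ C ∈ rerooted S Aᶜ Z := by
  simp [reconnectClusters]

lemma mem_reconnect :
    C ∈ reconnect S A Y Z ↔ C ∈ reconnectClusters S A Y Z ∨ Cᶜ ∈ reconnectClusters S A Y Z := by
  simp only [reconnect, mem_union, mem_image]
  exact or_congr_right ⟨fun ⟨D, hD, hDC⟩ => hDC ▸ (compl_compl D).symm ▸ hD,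
    fun h => ⟨Cᶜ, h, compl_compl C⟩⟩

lemma compl_mem_reconnect (hC : C ∈ reconnect S A Y Z) : Cᶜ ∈ reconnect S A Y Z := by
  rw [mem_reconnect, compl_compl]
  exact (mem_reconnect.1 hC).symm

lemma reconnect_comm : reconnect S Aᶜ Z Y = reconnect S A Y Z := by
  have : reconnectClusters S Aᶜ Z Y = reconnectClusters S A Y Z := by
    rw [reconnectClusters, reconnectClusters, compl_compl, insert_comm, union_comm]
  rw [reconnect, reconnect, this]

lemma self_mem_reconnect : A ∈ reconnect S A Y Z :=
  mem_reconnect.2 <| .inl <| mem_reconnectClusters.2 <| .inl rfl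

lemma mem_reconnect_of_mem_rerooted (hW : W ∈ rerooted S A Y) : W ∈ reconnect S A Y Z :=
  mem_reconnect.2 <| .inl <| mem_reconnectClusters.2 <| .inr <| .inr <| .inl hW

namespace IsSplitSystem

lemma reconnectClusters_compatible (hS : IsSplitSystem univ S) (hA : A ∈ S)
    (hY : 1 < A.card → Y ∈ traces S A) (hZ : 1 < Aᶜ.card → Z ∈ traces S Aᶜ)
    (hC : C ∈ reconnectClusters S A Y Z) (hW : W ∈ reconnectClusters S A Y Z) :
    CompatibleOn univ C W := by
  have hY' : ∀ {W}, W ∈ rerooted S A Y → Y ∈ traces S A := fun hW =>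
    hY (one_lt_card_of_mem_traces (mem_rerooted.1 hW).1)
  have hZ' : ∀ {W}, W ∈ rerooted S Aᶜ Z → Z ∈ traces S Aᶜ := fun hW =>
    hZ (one_lt_card_of_mem_traces (mem_rerooted.1 hW).1)
  have hdisj : ∀ {W U}, W ∈ rerooted S A Y → U ∈ rerooted S Aᶜ Z → Disjoint W U :=
    fun hW hU => disjoint_compl_right.mono (subset_of_mem_rerooted hW) (subset_of_mem_rerooted hU)
  rcases mem_reconnectClusters.1 hC with rfl | rfl | hC | hC <;>
    rcases mem_reconnectClusters.1 hW with rfl | rfl | hW | hW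
  · exact .inl subset_rfl
  · exact .inr <| .inr <| .inl disjoint_compl_right
  · exact .inr <| .inl <| subset_of_mem_rerooted hW
  · exact .inr <| .inr <| .inl <| subset_compl_iff_disjoint_right.1 (subset_of_mem_rerooted hW)
      |>.symm
  · exact .inr <| .inr <| .inl disjoint_compl_left
  · exact .inl subset_rfl
  · exact .inr <| .inr <| .inl <| (disjoint_compl_left.mono_right (subset_of_mem_rerooted hW))
  · exact .inr <| .inl <| subset_of_mem_rerooted hW
  · exact .inl <| subset_of_mem_rerooted hC
  · exact .inr <| .inr <| .inl <| disjoint_compl_right.mono_left (subset_of_mem_rerooted hC)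
  · exact hS.rerooted_compatible hA (hY' hC) hC hW
  · exact .inr <| .inr <| .inl <| hdisj hC hW
  · exact .inr <| .inr <| .inl <| subset_compl_iff_disjoint_right.1 (subset_of_mem_rerooted hC)
  · exact .inl <| subset_of_mem_rerooted hC
  · exact .inr <| .inr <| .inl <| (hdisj hW hC).symm
  · exact hS.rerooted_compatible (hS.compl_mem hA) (hZ' hC) hC hW

lemma reconnect_compatible (hS : IsSplitSystem univ S) (hA : A ∈ S)
    (hY : 1 < A.card → Y ∈ traces S A) (hZ : 1 < Aᶜ.card → Z ∈ traces S Aᶜ)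
    (hC : C ∈ reconnect S A Y Z) (hW : W ∈ reconnect S A Y Z) : CompatibleOn univ C W := by
  have h := fun {C W} => hS.reconnectClusters_compatible (C := C) (W := W) hA hY hZ
  rcases mem_reconnect.1 hC with hC | hC <;> rcases mem_reconnect.1 hW with hW | hW
  · exact h hC hW
  · simpa using (h hC hW).compl_right
  · simpa using (h hC hW).compl_left
  · simpa using (h hC hW).compl_left.compl_right

lemma nonempty_and_ne_univ_of_mem_reconnect (hS : IsSplitSystem univ S) (hA : A ∈ S)
    (hC : C ∈ reconnect S A Y Z) : C.Nonempty ∧ C ≠ univ := by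
  have hK : ∀ {D}, D ∈ reconnectClusters S A Y Z → D.Nonempty ∧ D ≠ univ := fun hD => by
    have hAc := hS.compl_mem hA
    rcases mem_reconnectClusters.1 hD with rfl | rfl | hD | hD
    · exact ⟨hS.nonempty _ hA, hS.ne_ground _ hA⟩
    · exact ⟨hS.nonempty _ hAc, hS.ne_ground _ hAc⟩
    · exact ⟨(mem_traces.1 (mem_rerooted.1 hD).1).2.1,
        ((ssubset_of_mem_traces (mem_rerooted.1 hD).1).trans (hS.ssubset hA)).ne⟩
    · exact ⟨(mem_traces.1 (mem_rerooted.1 hD).1).2.1,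
        ((ssubset_of_mem_traces (mem_rerooted.1 hD).1).trans (hS.ssubset hAc)).ne⟩
  rcases mem_reconnect.1 hC with hC | hC
  · exact hK hC
  · obtain ⟨h₁, h₂⟩ := hK hC
    exact ⟨(compl_ne_univ_iff_nonempty C).1 h₂, fun h => by simp [h] at h₁⟩

lemma singleton_mem_reconnect (hS : IsSplitSystem univ S) {x : α} (hx : x ∈ A) :
    {x} ∈ reconnect S A Y Z := by
  obtain h | h := (singleton_subset_iff.2 hx).eq_or_ssubset
  · exact h ▸ self_mem_reconnect
  · refine mem_reconnect_of_mem_rerooted <| mem_rerooted.2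
      ⟨mem_traces_of_mem (hS.singleton_mem x (mem_univ x)) (singleton_nonempty x) h, ?_⟩
    by_cases hxY : x ∈ Y
    · exact .inl (singleton_subset_iff.2 hxY)
    · exact .inr (singleton_subset_iff.2 (mem_sdiff.2 ⟨hx, hxY⟩))

lemma mem_reconnect_of_subset (hS : IsSplitSystem univ S) (hA : A ∈ S)
    (hY : 1 < A.card → Y ∈ traces S A) (hCA : C ⊆ A) (hC : C.Nonempty)
    (hcomp : ∀ D ∈ reconnect S A Y Z, CompatibleOn univ C D) : C ∈ reconnect S A Y Z := by
  obtain rfl | hCA := hCA.eq_or_ssubset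
  · exact self_mem_reconnect
  have h2 : 1 < A.card := (one_le_card.2 hC).trans_lt (card_lt_card hCA)
  have hY := hY h2
  have hAu := hS.ssubset hA
  have hcompA : ∀ D ∈ rerooted S A Y, CompatibleOn A C D := fun D hD =>
    (hcomp D (mem_reconnect_of_mem_rerooted hD)).of_ground_ssubset
      (union_subset hCA.subset (subset_of_mem_rerooted hD)) hAu
  have hCt : C ∈ traces S A := (hS.isSplitSystem_traces hA h2).maximal C hCA.subset hC hCA.ne
    fun U hU => by
      rcases hS.mem_rerooted_or_sdiff_mem hA hY hU with h | h
      · exact hcompA U h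
      · exact (CompatibleOn.sdiff_right_iff hCA.subset (ssubset_of_mem_traces hU).subset).1
          (hcompA _ h)
  refine mem_reconnect_of_mem_rerooted <| mem_rerooted.2 ⟨hCt, ?_⟩
  exact subset_or_subset_sdiff_of_compatibleOn hAu (ssubset_of_mem_traces hY).subset
    (mem_traces.1 hY).2.1 hCA (hcomp Y (mem_reconnect_of_mem_rerooted (self_mem_rerooted hY)))
    (hcomp _ (mem_reconnect_of_mem_rerooted (hS.sdiff_mem_rerooted hA hY)))

theorem isSplitSystem_reconnect (hS : IsSplitSystem univ S) (hA : A ∈ S)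
    (hY : 1 < A.card → Y ∈ traces S A) (hZ : 1 < Aᶜ.card → Z ∈ traces S Aᶜ) :
    IsSplitSystem univ (reconnect S A Y Z) where
  subset C _ := subset_univ C
  nonempty C hC := (hS.nonempty_and_ne_univ_of_mem_reconnect hA hC).1
  ne_ground C hC := (hS.nonempty_and_ne_univ_of_mem_reconnect hA hC).2
  sdiff_mem C hC := by simpa [← compl_eq_univ_sdiff] using compl_mem_reconnect hC
  singleton_mem x _ := by
    by_cases hx : x ∈ A
    · exact hS.singleton_mem_reconnect hx
    · rw [← reconnect_comm]
      exact hS.singleton_mem_reconnect (mem_compl.2 hx)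
  compatible C hC W hW := hS.reconnect_compatible hA hY hZ hC hW
  maximal C _ hC hCu hcomp := by
    refine mem_of_compatibleOn_of_forall_subset (A := A)
      (P := fun D => D.Nonempty ∧ D ≠ univ ∧ ∀ E ∈ reconnect S A Y Z, CompatibleOn univ D E)
      (fun D hD => compl_mem_reconnect hD) (fun D ⟨hD, hDu, hDc⟩ => ?_) (fun D ⟨hD, _, hDc⟩ => ?_)
      ⟨hC, hCu, hcomp⟩ (hcomp A self_mem_reconnect)
    · exact ⟨by simpa [nonempty_iff_ne_empty, compl_eq_empty_iff] using hDu,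
        (compl_ne_univ_iff_nonempty D).2 hD, fun E hE => (hDc E hE).compl_left⟩
    · rintro (hDA | hDA)
      · exact hS.mem_reconnect_of_subset hA hY hDA hD hDc
      · rw [← reconnect_comm] at hDc ⊢
        exact hS.mem_reconnect_of_subset (hS.compl_mem hA) hZ hDA hD hDc

lemma traces_reconnect (hS : IsSplitSystem univ S) (hA : A ∈ S)
    (hY : 1 < A.card → Y ∈ traces S A) : traces (reconnect S A Y Z) A = traces S A := by
  ext W
  constructor
  · intro hW
    obtain ⟨⟨C, hC, rfl⟩, hne, hneA⟩ := mem_traces.1 hW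
    have hCA : ¬A ⊆ C := fun h => hneA (inter_eq_right.2 h)
    have hCA' : ¬Disjoint C A := fun h => hne.ne_empty (disjoint_iff_inter_eq_empty.1 h)
    rcases mem_reconnect.1 hC with hC | hC <;> rcases mem_reconnectClusters.1 hC with h | h | h | h
    · exact absurd h.ge hCA
    · exact absurd (h ▸ disjoint_compl_left) hCA'
    · rw [inter_eq_left.2 (subset_of_mem_rerooted h)]
      exact (mem_rerooted.1 h).1
    · exact absurd (subset_compl_iff_disjoint_right.1 (subset_of_mem_rerooted h)) hCA'
    · exact absurd (subset_compl_iff_disjoint_right.1 (compl_eq_comm.1 h).ge) hCA'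
    · exact absurd (compl_injective h).ge hCA
    · have := hS.sdiff_mem_traces hA (mem_rerooted.1 h).1
      rwa [sdiff_compl, inf_eq_inter, inter_comm] at this
    · exact absurd (compl_subset_compl.1 (subset_of_mem_rerooted h |>.trans (by simp))) hCA
  · intro hW
    have hWA := (ssubset_of_mem_traces hW).subset
    refine mem_traces.2 ⟨?_, (mem_traces.1 hW).2⟩
    rcases hS.mem_rerooted_or_sdiff_mem hA (hY (one_lt_card_of_mem_traces hW)) hW with h | h
    · exact ⟨W, mem_reconnect_of_mem_rerooted h, inter_eq_left.2 hWA⟩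
    · refine ⟨(A \ W)ᶜ, compl_mem_reconnect (mem_reconnect_of_mem_rerooted h), ?_⟩
      ext x
      have := @hWA x
      simp only [mem_inter, mem_compl, mem_sdiff]
      tauto

lemma mem_reconnect_of_mem_of_subset (hS' : IsSplitSystem univ S') (hA' : A ∈ S')
    (htA : traces S' A = traces S A) (hY : 1 < A.card → Y ∈ S' ∧ A \ Y ∈ S' ∧ Y ⊂ A)
    (hD : D ∈ S') (hDA : D ⊆ A) : D ∈ reconnect S A Y Z := by
  obtain rfl | hDA := hDA.eq_or_ssubset
  · exact self_mem_reconnect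
  obtain ⟨hYS, hAYS, hYA⟩ := hY ((one_le_card.2 (hS'.nonempty D hD)).trans_lt (card_lt_card hDA))
  exact mem_reconnect_of_mem_rerooted <| mem_rerooted.2
    ⟨htA ▸ mem_traces_of_mem hD (hS'.nonempty D hD) hDA,
      hS'.subset_or_subset_sdiff hA' hYS hAYS hYA.subset hD hDA⟩

/-- `T'` joins `T|A` and `T|Aᶜ` at the edges above the children `Y` of `A` and `Z` of `Aᶜ` in
`T'`. -/
theorem eq_reconnect (hS : IsSplitSystem univ S) (hS' : IsSplitSystem univ S') (hA : A ∈ S)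
    (hA' : A ∈ S') (htA : traces S' A = traces S A) (htAc : traces S' Aᶜ = traces S Aᶜ)
    (hY : 1 < A.card → Y ∈ S' ∧ A \ Y ∈ S' ∧ Y ⊂ A)
    (hZ : 1 < Aᶜ.card → Z ∈ S' ∧ Aᶜ \ Z ∈ S' ∧ Z ⊂ Aᶜ) : S' = reconnect S A Y Z := by
  have htraces : ∀ {A Y}, traces S' A = traces S A → (1 < A.card → Y ∈ S' ∧ A \ Y ∈ S' ∧ Y ⊂ A) →
      1 < A.card → Y ∈ traces S A := fun htA hY h => by
    obtain ⟨hYS, -, hYA⟩ := hY h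
    exact htA ▸ mem_traces_of_mem hYS (hS'.nonempty _ hYS) hYA
  have hR := hS.isSplitSystem_reconnect hA (htraces htA hY) (htraces htAc hZ)
  refine hS'.eq_of_subset hR.compatible (fun C hC => ⟨hR.ssubset hC, hR.nonempty C hC⟩)
    fun C hC => mem_of_compatibleOn_of_forall_subset (P := (· ∈ S'))
      (fun D hD => compl_mem_reconnect hD) (fun D hD => hS'.compl_mem hD) (fun D hD => ?_) hC
      (hS'.compatible C hC A hA')
  rintro (hDA | hDA)
  · exact hS'.mem_reconnect_of_mem_of_subset hA' htA hY hD hDA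
  · rw [← reconnect_comm]
    exact hS'.mem_reconnect_of_mem_of_subset (hS'.compl_mem hA') htAc hZ hD hDA

lemma eq_or_eq_sdiff_of_reconnect_eq (hS : IsSplitSystem univ S) (hA : A ∈ S)
    (hY : Y ∈ traces S A) (hY' : Y' ∈ traces S A) (hZ : 1 < Aᶜ.card → Z ∈ traces S Aᶜ)
    (h : reconnect S A Y Z = reconnect S A Y' Z') : Y' = Y ∨ Y' = A \ Y := by
  have hR := hS.isSplitSystem_reconnect hA (fun _ => hY) hZ
  have hmem : ∀ {Y Z}, Y ∈ traces S A → Y ∈ reconnect S A Y Z ∧ A \ Y ∈ reconnect S A Y Z :=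
    fun hY => ⟨mem_reconnect_of_mem_rerooted (self_mem_rerooted hY),
      mem_reconnect_of_mem_rerooted (hS.sdiff_mem_rerooted hA hY)⟩
  exact hR.eq_or_eq_sdiff_of_sdiff_mem self_mem_reconnect (hmem hY).1 (hmem hY).2
    (ssubset_of_mem_traces hY) (h ▸ (hmem hY').1) (h ▸ (hmem hY').2) (ssubset_of_mem_traces hY')

lemma eq_of_reconnect_eq (hS : IsSplitSystem univ S) (hA : A ∈ S) (ha : a ∈ A)
    (hY : Y ∈ attachments S A a) (hY' : Y' ∈ attachments S A a)
    (hZ : 1 < Aᶜ.card → Z ∈ traces S Aᶜ) (h : reconnect S A Y Z = reconnect S A Y' Z') :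
    Y = Y' := by
  by_cases h2 : 1 < A.card
  · obtain ⟨hYt, haY⟩ := mem_traces_of_mem_attachments hY h2
    obtain ⟨hY't, haY'⟩ := mem_traces_of_mem_attachments hY' h2
    rcases hS.eq_or_eq_sdiff_of_reconnect_eq hA hYt hY't hZ h with h' | h'
    · exact h'.symm
    · exact absurd (h' ▸ mem_sdiff.2 ⟨ha, haY⟩) haY'
  · rw [eq_empty_of_mem_attachments hY h2, eq_empty_of_mem_attachments hY' h2]

lemma reconnect_injOn (hS : IsSplitSystem univ S) (hA : A ∈ S) (ha : a ∈ A) (hb : b ∈ Aᶜ) :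
    Set.InjOn (fun p : Finset α × Finset α => reconnect S A p.1 p.2)
      ↑(attachments S A a ×ˢ attachments S Aᶜ b) := by
  rintro ⟨Y, Z⟩ hp ⟨Y', Z'⟩ hq (h : reconnect S A Y Z = reconnect S A Y' Z')
  obtain ⟨hY, hZ⟩ := mem_product.1 (mem_coe.1 hp)
  obtain ⟨hY', hZ'⟩ := mem_product.1 (mem_coe.1 hq)
  refine Prod.ext (hS.eq_of_reconnect_eq hA ha hY hY'
    (fun h2 => (mem_traces_of_mem_attachments hZ h2).1) h) ?_
  rw [← reconnect_comm, ← reconnect_comm (A := A)] at h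
  exact hS.eq_of_reconnect_eq (hS.compl_mem hA) hb hZ hZ'
    (fun h2 => by simpa using (mem_traces_of_mem_attachments hY (by simpa using h2)).1) h

end IsSplitSystem

end Reconnect

namespace PhyloTree

variable {n : ℕ} {T T' : PhyloTree n} {A : Finset (Fin n)}

lemma isSplitSystem (T : PhyloTree n) : IsSplitSystem univ T.sides where
  subset A _ := subset_univ A
  nonempty A hA := (T.proper A hA).1
  ne_ground A hA := (T.proper A hA).2
  sdiff_mem A hA := by simpa [compl_eq_univ_sdiff] using T.compl_mem A hA
  singleton_mem x _ := T.singleton_mem x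
  compatible := T.compatible
  maximal A _ hA hAu hc := T.maximal A hA hAu hc

def ofSplitSystem {S : Finset (Finset (Fin n))} (hS : IsSplitSystem univ S) : PhyloTree n where
  sides := S
  proper A hA := ⟨hS.nonempty A hA, hS.ne_ground A hA⟩
  compl_mem _ hA := hS.compl_mem hA
  singleton_mem x := hS.singleton_mem x (mem_univ x)
  compatible := hS.compatible
  maximal A hA hAu := hS.maximal A (subset_univ A) hA hAu

lemma sides_injective : Function.Injective (sides : PhyloTree n → Finset (Finset (Fin n))) := by
  rintro ⟨⟩ ⟨⟩ rfl
  rfl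

instance : DecidableEq (PhyloTree n) := fun _ _ => decidable_of_iff _ sides_injective.eq_iff

noncomputable instance : Fintype (PhyloTree n) := Fintype.ofInjective _ sides_injective

lemma restrict_eq_insert_traces (hA : A ∈ T.sides) :
    T.restrict A = insert ∅ (insert A (traces T.sides A)) := by
  ext W
  simp only [restrict, traces, mem_insert, mem_filter, mem_image]
  constructor
  · rintro ⟨V, hV, rfl⟩
    by_cases h : (V ∩ A).Nonempty ∧ V ∩ A ≠ A
    · exact .inr <| .inr ⟨⟨V, hV, rfl⟩, h⟩
    · rw [not_and_or, not_nonempty_iff_eq_empty, not_ne_iff] at h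
      tauto
  · rintro (rfl | rfl | ⟨h, -⟩)
    exacts [⟨Aᶜ, T.compl_mem A hA, by rw [inter_comm, inter_compl]⟩, ⟨W, hA, inter_self W⟩, h]

lemma restrict_eq_restrict_iff (hA : A ∈ T.sides) (hA' : A ∈ T'.sides) :
    T.restrict A = T'.restrict A ↔ traces T.sides A = traces T'.sides A :=
  ⟨fun h => by
    show (T.restrict A).filter _ = (T'.restrict A).filter _
    rw [h], fun h => by
    rw [restrict_eq_insert_traces hA, restrict_eq_insert_traces hA', h]⟩

/-- The trees obtained from `T` by deleting the edge `A | Aᶜ` and reconnecting the two pieces,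
`T` itself included. -/
noncomputable def reconnections (T : PhyloTree n) (A : Finset (Fin n)) : Finset (PhyloTree n) :=
  univ.filter fun T' => A ∈ T'.sides ∧ T.restrict A = T'.restrict A ∧
    T.restrict Aᶜ = T'.restrict Aᶜ

lemma mem_reconnections : T' ∈ T.reconnections A ↔
    A ∈ T'.sides ∧ T.restrict A = T'.restrict A ∧ T.restrict Aᶜ = T'.restrict Aᶜ := by
  simp [reconnections]

lemma map_reconnections (hA : A ∈ T.sides) (a b : Fin n) :
    (T.reconnections A).map ⟨sides, sides_injective⟩ =
      (attachments T.sides A a ×ˢ attachments T.sides Aᶜ b).image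
        fun p => reconnect T.sides A p.1 p.2 := by
  have hAc := T.compl_mem A hA
  ext S
  simp only [mem_map, mem_image, mem_reconnections, Function.Embedding.coeFn_mk, mem_product]
  constructor
  · rintro ⟨T', ⟨hA', hrA, hrAc⟩, rfl⟩
    have htA := ((restrict_eq_restrict_iff hA hA').1 hrA).symm
    have htAc := ((restrict_eq_restrict_iff hAc (T'.compl_mem A hA')).1 hrAc).symm
    obtain ⟨Y, hY, hYc⟩ := T'.isSplitSystem.exists_mem_attachments hA' htA a
    obtain ⟨Z, hZ, hZc⟩ := T'.isSplitSystem.exists_mem_attachments (T'.compl_mem A hA') htAc b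
    exact ⟨(Y, Z), ⟨hY, hZ⟩,
      (T.isSplitSystem.eq_reconnect T'.isSplitSystem hA hA' htA htAc hYc hZc).symm⟩
  · rintro ⟨⟨Y, Z⟩, ⟨hY, hZ⟩, rfl⟩
    have hYt := fun h => (mem_traces_of_mem_attachments hY h).1
    have hZt := fun h => (mem_traces_of_mem_attachments hZ h).1
    refine ⟨ofSplitSystem (T.isSplitSystem.isSplitSystem_reconnect hA hYt hZt),
      ⟨self_mem_reconnect, ?_, ?_⟩, rfl⟩
    · rw [restrict_eq_restrict_iff hA self_mem_reconnect]
      exact (T.isSplitSystem.traces_reconnect hA hYt).symm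
    · rw [restrict_eq_restrict_iff hAc (compl_mem_reconnect self_mem_reconnect)]
      show _ = traces (reconnect T.sides A Y Z) Aᶜ
      rw [← reconnect_comm]
      exact (T.isSplitSystem.traces_reconnect hAc hZt).symm

theorem card_reconnections (hA : A ∈ T.sides) :
    (T.reconnections A).card = attachCount A.card * attachCount Aᶜ.card := by
  obtain ⟨a, ha⟩ := (T.proper A hA).1
  obtain ⟨b, hb⟩ := (T.proper _ (T.compl_mem A hA)).1
  rw [← card_map ⟨sides, sides_injective⟩, map_reconnections hA a b,
    card_image_of_injOn (T.isSplitSystem.reconnect_injOn hA ha hb), card_product,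
    T.isSplitSystem.card_attachments hA ha,
    T.isSplitSystem.card_attachments (T.compl_mem A hA) hb]

lemma self_mem_reconnections (hA : A ∈ T.sides) : T ∈ T.reconnections A :=
  mem_reconnections.2 ⟨hA, rfl, rfl⟩

lemma OTBR_eq_biUnion (x : Fin n) :
    T.OTBR = ↑((T.sides.filter (x ∉ ·)).biUnion fun A =>
      ((T.reconnections A).erase T).image fun T' => (s(A, Aᶜ), T')) := by
  ext θ
  simp only [OTBR, Set.mem_ofPred_eq, coe_biUnion, coe_filter, coe_image, coe_erase,
    Set.mem_iUnion, Set.mem_image, Set.mem_sdiff, mem_coe, mem_reconnections,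
    Set.mem_singleton_iff, exists_prop]
  constructor
  · rintro ⟨hne, A, he, hA, hA', hrA, hrAc⟩
    by_cases hx : x ∈ A
    · refine ⟨Aᶜ, ⟨T.compl_mem A hA, by simpa using hx⟩, θ.2,
        ⟨⟨θ.2.compl_mem A hA', hrAc, by rwa [compl_compl]⟩, hne⟩, Prod.ext ?_ rfl⟩
      rw [he, compl_compl, Sym2.eq_swap]
    · exact ⟨A, ⟨hA, hx⟩, θ.2, ⟨⟨hA', hrA, hrAc⟩, hne⟩, Prod.ext he.symm rfl⟩
  · rintro ⟨A, ⟨hA, -⟩, T', ⟨⟨hA', hrA, hrAc⟩, hne⟩, rfl⟩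
    exact ⟨hne, A, rfl, hA, hA', hrA, hrAc⟩

lemma ncard_OTBR (x : Fin n) :
    T.OTBR.ncard = ∑ A ∈ T.sides.filter (x ∉ ·), ((T.reconnections A).card - 1) := by
  rw [OTBR_eq_biUnion x, Set.ncard_coe_finset, card_biUnion]
  · refine sum_congr rfl fun A hA => ?_
    rw [card_image_of_injective _ fun _ _ h => (Prod.ext_iff.1 h).2,
      card_erase_of_mem (self_mem_reconnections (mem_filter.1 hA).1)]
  · intro A hA B hB hAB
    simp only [Function.onFun, disjoint_left, mem_image]
    rintro θ ⟨T₁, -, rfl⟩ ⟨T₂, -, h⟩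
    rcases Sym2.eq_iff.1 (congrArg Prod.fst h) with ⟨rfl, -⟩ | ⟨rfl, -⟩
    · exact hAB rfl
    · exact (mem_filter.1 hB).2 (by simpa using (mem_filter.1 hA).2)

abbrev IsNontrivialSide (A : Finset (Fin n)) : Prop := 2 ≤ A.card ∧ 2 ≤ Aᶜ.card

lemma card_sides_add_six (hn : 2 ≤ n) : T.sides.card + 6 = 4 * n := by
  simpa using T.isSplitSystem.card_add_six (by rw [card_univ, Fintype.card_fin]; omega)

lemma one_le_card_of_mem_sides (hA : A ∈ T.sides) : 1 ≤ A.card :=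
  one_le_card.2 (T.proper A hA).1

lemma card_add_card_compl_eq (A : Finset (Fin n)) : A.card + Aᶜ.card = n := by
  rw [card_add_card_compl, Fintype.card_fin]

lemma card_sides_filter_not_isNontrivialSide (hn : 3 ≤ n) :
    (T.sides.filter (¬IsNontrivialSide ·)).card = 2 * n := by
  have hsplit : (T.sides.filter (¬IsNontrivialSide ·)) =
      univ.image (fun x => {x}) ∪ univ.image (fun x => {x}ᶜ) := by
    ext A
    simp only [mem_filter, mem_union, mem_image, mem_univ, true_and]
    constructor
    · rintro ⟨hA, h⟩
      have := one_le_card_of_mem_sides hA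
      have := one_le_card_of_mem_sides (T.compl_mem A hA)
      rcases (show A.card = 1 ∨ Aᶜ.card = 1 by omega) with h | h
      · obtain ⟨x, rfl⟩ := card_eq_one.1 h
        exact .inl ⟨x, rfl⟩
      · obtain ⟨x, hx⟩ := card_eq_one.1 h
        exact .inr ⟨x, by rw [← hx, compl_compl]⟩
    · rintro (⟨x, rfl⟩ | ⟨x, rfl⟩)
      · exact ⟨T.singleton_mem x, by simp⟩
      · exact ⟨T.compl_mem _ (T.singleton_mem x), by simp⟩
  have hdisj : Disjoint (univ.image fun x : Fin n => ({x} : Finset (Fin n)))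
      (univ.image fun x => {x}ᶜ) := by
    simp only [disjoint_left, mem_image, mem_univ, true_and, not_exists]
    rintro _ ⟨x, rfl⟩ y h
    have := congrArg card h
    rw [card_compl, card_singleton, card_singleton, Fintype.card_fin] at this
    omega
  rw [hsplit, card_union_of_disjoint hdisj, card_image_of_injective _ singleton_injective,
    card_image_of_injective _ fun x y h => singleton_injective (compl_injective h), card_univ,
    Fintype.card_fin]
  ring

lemma sum_filter_sides_eq {β : Type*} [AddCommMonoid β] (p : Finset (Fin n) → Prop)
    [DecidablePred p] (hp : ∀ A, p Aᶜ ↔ p A) (x : Fin n) (f : Finset (Fin n) → β)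
    (hf : ∀ A, f Aᶜ = f A) :
    ∑ A ∈ T.sides.filter p, f A = 2 • ∑ A ∈ (T.sides.filter (x ∉ ·)).filter p, f A := by
  rw [filter_comm]
  refine sum_eq_two_nsmul_sum_filter_notMem (X := univ) (fun A hA => ?_) (mem_univ x) f
    fun A _ => by rw [← compl_eq_univ_sdiff, hf]
  obtain ⟨hA, hpA⟩ := mem_filter.1 hA
  exact ⟨subset_univ A, mem_filter.2 ⟨by simpa [← compl_eq_univ_sdiff] using T.compl_mem A hA,
    by rwa [← compl_eq_univ_sdiff, hp]⟩⟩

lemma card_filter_sides_eq (p : Finset (Fin n) → Prop) [DecidablePred p] (hp : ∀ A, p Aᶜ ↔ p A)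
    (x : Fin n) : (T.sides.filter p).card = 2 * ((T.sides.filter (x ∉ ·)).filter p).card := by
  simpa only [← card_eq_sum_ones, smul_eq_mul] using
    sum_filter_sides_eq p hp x (fun _ => (1 : ℕ)) fun _ => rfl

lemma isNontrivialSide_compl (A : Finset (Fin n)) :
    IsNontrivialSide Aᶜ ↔ IsNontrivialSide A := by
  rw [IsNontrivialSide, compl_compl, and_comm]

lemma gamma_eq_sum (x : Fin n) : T.gamma = ∑ A ∈ (T.sides.filter (x ∉ ·)).filter
    IsNontrivialSide, A.card * Aᶜ.card := by
  rw [gamma, sum_filter_sides_eq IsNontrivialSide isNontrivialSide_compl x _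
      fun A => by rw [compl_compl, mul_comm],
    smul_eq_mul, Nat.mul_div_cancel_left _ two_pos]

lemma card_filter_isNontrivialSide_add_three (hn : 3 ≤ n) (x : Fin n) :
    ((T.sides.filter (x ∉ ·)).filter IsNontrivialSide).card + 3 = n := by
  have h₁ := card_filter_sides_eq (T := T) IsNontrivialSide
    isNontrivialSide_compl x
  have h₂ := card_filter_add_card_filter_not (s := T.sides)
    (p := IsNontrivialSide)
  have := card_sides_add_six (T := T) (by omega)
  have := card_sides_filter_not_isNontrivialSide (T := T) hn
  omega

lemma card_filter_not_isNontrivialSide (hn : 3 ≤ n) (x : Fin n) :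
    ((T.sides.filter (x ∉ ·)).filter (¬IsNontrivialSide ·)).card = n := by
  have := card_filter_sides_eq (T := T) (¬IsNontrivialSide ·)
    (fun A => not_congr (isNontrivialSide_compl A)) x
  have := card_sides_filter_not_isNontrivialSide (T := T) hn
  omega

lemma card_reconnections_sub_one_of_isNontrivialSide (hA : A ∈ T.sides)
    (h : IsNontrivialSide A) :
    (((T.reconnections A).card - 1 : ℕ) : ℤ) = 4 * (A.card * Aᶜ.card : ℕ) - (6 * n - 8) := by
  have hn : (n : ℤ) = A.card + Aᶜ.card := by exact_mod_cast (card_add_card_compl_eq A).symm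
  have : 1 ≤ (2 * A.card - 3) * (2 * Aᶜ.card - 3) := one_le_mul (by omega) (by omega)
  rw [card_reconnections hA, attachCount, attachCount, if_pos (by omega), if_pos (by omega),
    hn, Nat.cast_sub this]
  push_cast [Nat.cast_sub (by omega : 3 ≤ 2 * A.card), Nat.cast_sub (by omega : 3 ≤ 2 * Aᶜ.card)]
  ring

lemma card_reconnections_sub_one_of_not_isNontrivialSide (hn : 3 ≤ n) (hA : A ∈ T.sides)
    (h : ¬IsNontrivialSide A) : (((T.reconnections A).card - 1 : ℕ) : ℤ) = 2 * n - 6 := by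
  have := one_le_card_of_mem_sides hA
  have := one_le_card_of_mem_sides (T.compl_mem A hA)
  have := card_add_card_compl_eq A
  rw [card_reconnections hA, attachCount, attachCount]
  rcases (show A.card = 1 ∨ Aᶜ.card = 1 by omega) with h' | h'
  · rw [if_neg (by omega), if_pos (by omega)]
    omega
  · rw [if_pos (by omega), if_neg (by omega)]
    omega

lemma sum_isNontrivialSide_card_reconnections_sub_one (hn : 3 ≤ n) (x : Fin n) :
    ∑ A ∈ (T.sides.filter (x ∉ ·)).filter IsNontrivialSide,
      (((T.reconnections A).card - 1 : ℕ) : ℤ) = 4 * T.gamma - (n - 3) * (6 * n - 8) := by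
  rw [sum_congr rfl fun A hA => card_reconnections_sub_one_of_isNontrivialSide
      (mem_filter.1 (mem_filter.1 hA).1).1 (mem_filter.1 hA).2,
    sum_sub_distrib, ← mul_sum, ← Nat.cast_sum, ← gamma_eq_sum, sum_const, nsmul_eq_mul]
  have := card_filter_isNontrivialSide_add_three (T := T) hn x
  congr
  omega

lemma sum_not_isNontrivialSide_card_reconnections_sub_one (hn : 3 ≤ n) (x : Fin n) :
    ∑ A ∈ (T.sides.filter (x ∉ ·)).filter (¬IsNontrivialSide ·),
      (((T.reconnections A).card - 1 : ℕ) : ℤ) = n * (2 * n - 6) := by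
  rw [sum_congr rfl fun A hA => card_reconnections_sub_one_of_not_isNontrivialSide hn
      (mem_filter.1 (mem_filter.1 hA).1).1 (mem_filter.1 hA).2,
    sum_const, card_filter_not_isNontrivialSide hn, nsmul_eq_mul]

end PhyloTree

/-- Theorem 5: `|O_TBR(T)| = 4Γ(T) − 4(n−2)(n−3)` for
`T ∈ 𝒯_n`, `n ≥ 4`. -/
theorem otbr_card (n : ℕ) (hn : 4 ≤ n) (T : PhyloTree n) :
    ((T.OTBR.ncard : ℤ)) =
      4 * (T.gamma : ℤ) - 4 * ((n : ℤ) - 2) * ((n : ℤ) - 3) := by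
  let x : Fin n := ⟨0, by omega⟩
  rw [T.ncard_OTBR x, Nat.cast_sum,
    ← sum_filter_add_sum_filter_not _ PhyloTree.IsNontrivialSide,
    T.sum_isNontrivialSide_card_reconnections_sub_one (by omega),
    T.sum_not_isNontrivialSide_card_reconnections_sub_one (by omega)]
  ring
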